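/- Let X₁,...,X_N be independent scaled Bernoulli random variables, X_i ~ Ber(p_i, s_i) with 0 < s_i ≤ 1, and let B = Σ_i X_i. If P(B > 1) ≤ α for some α < 1, then E(B) ≤ (1 + α)/(1 − α). -/

import Mathlib

/-!
Write `μ = ∑ pᵢ sᵢ = 𝔼 B`. By induction on the number of items one shows, for every threshold
`c ≥ 0` and every `M ≥ μ`, that `μ ≤ c + ℙ(B > c) (1 + M)`: conditioning on the first item
`X₁ ~ Ber(p, s)`, when it is present the rest must exceed `c - s`, which either is again a
nonnegative threshold or is exceeded surely since all sizes are nonnegative; the bound on the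
present branch uses `s ≤ 1`. Taking `c = 1`, `M = μ` gives `μ ≤ 1 + α (1 + μ)`.
-/

open MeasureTheory
open scoped NNReal ENNReal

/-- Scaled Bernoulli distribution `Ber(p, s)`. -/
noncomputable def berS (p : ℝ) (hp : p ≤ 1) (s : ℝ) : PMF ℝ :=
  (PMF.bernoulli (Real.toNNReal p) (Real.toNNReal_le_one.mpr hp)).map
    (fun b => if b then s else 0)

/-- Convolution: distribution of the sum of independent discrete variables. -/
noncomputable def conv (X Y : PMF ℝ) : PMF ℝ := X.bind fun a => Y.map (fun b => a + b)

/-- Distribution of the sum of independent items. -/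
noncomputable def pmfSum {m : ℕ} (f : Fin m → PMF ℝ) : PMF ℝ :=
  (List.ofFn f).foldr conv (PMF.pure 0)

lemma pmfSum_succ {m : ℕ} (f : Fin (m + 1) → PMF ℝ) :
    pmfSum f = conv (f 0) (pmfSum fun i => f i.succ) := by
  rw [pmfSum, List.ofFn_succ, List.foldr_cons, pmfSum]

lemma support_berS_subset {p : ℝ} (hp : p ≤ 1) (s : ℝ) :
    (berS p hp s).support ⊆ {0, s} := by
  rintro x hx
  simp only [berS, PMF.support_map, Set.mem_image] at hx
  obtain ⟨b, -, rfl⟩ := hx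
  cases b <;> simp

lemma nonneg_of_mem_support_berS {p : ℝ} (hp : p ≤ 1) {s : ℝ} (hs : 0 ≤ s) :
    ∀ x ∈ (berS p hp s).support, 0 ≤ x := fun _ hx => by
  rcases support_berS_subset hp s hx with rfl | rfl
  exacts [le_rfl, hs]

lemma nonneg_of_mem_support_conv {X Y : PMF ℝ} (hX : ∀ x ∈ X.support, 0 ≤ x)
    (hY : ∀ y ∈ Y.support, 0 ≤ y) : ∀ z ∈ (conv X Y).support, 0 ≤ z := by
  intro z hz
  simp only [conv, PMF.support_bind, PMF.support_map, Set.mem_iUnion, Set.mem_image] at hz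
  obtain ⟨x, hx, y, hy, rfl⟩ := hz
  exact add_nonneg (hX x hx) (hY y hy)

lemma nonneg_of_mem_support_pmfSum {m : ℕ} {f : Fin m → PMF ℝ}
    (hf : ∀ i, ∀ x ∈ (f i).support, 0 ≤ x) : ∀ z ∈ (pmfSum f).support, 0 ≤ z := by
  induction m with
  | zero => simp [pmfSum]
  | succ m ih =>
    rw [pmfSum_succ]
    exact nonneg_of_mem_support_conv (hf 0) (ih fun i => hf i.succ)

lemma toReal_conv_berS_Ioi {p : ℝ} (hp0 : 0 ≤ p) (hp1 : p ≤ 1) (s : ℝ) (Y : PMF ℝ) (c : ℝ) :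
    ((conv (berS p hp1 s) Y).toMeasure (Set.Ioi c)).toReal =
      p * (Y.toMeasure (Set.Ioi (c - s))).toReal + (1 - p) * (Y.toMeasure (Set.Ioi c)).toReal := by
  have hshift (a c : ℝ) : (fun b : ℝ => a + b) ⁻¹' Set.Ioi c = Set.Ioi (c - a) := by
    ext x; simp [sub_lt_iff_lt_add']
  rw [conv, berS, PMF.bind_map, PMF.toMeasure_bind_apply _ _ _ measurableSet_Ioi, tsum_bool]
  simp only [Function.comp_def, PMF.bernoulli_apply, cond_false, cond_true, if_true,
    if_false, Bool.false_eq_true]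
  rw [PMF.toMeasure_map_apply _ _ _ (measurable_const_add 0) measurableSet_Ioi,
    PMF.toMeasure_map_apply _ _ _ (measurable_const_add s) measurableSet_Ioi,
    hshift, hshift, sub_zero, ENNReal.toReal_add (by finiteness) (by finiteness)]
  simp only [ENNReal.toReal_mul, ENNReal.coe_toReal, Real.coe_toNNReal _ hp0,
    NNReal.coe_sub (Real.toNNReal_le_one.mpr hp1), NNReal.coe_one]
  ring

lemma sum_mul_le_add_toReal_pmfSum_berS_Ioi_mul {N : ℕ} (p s : Fin N → ℝ)
    (hp0 : ∀ i, 0 ≤ p i) (hp1 : ∀ i, p i ≤ 1) (hs0 : ∀ i, 0 ≤ s i) (hs1 : ∀ i, s i ≤ 1)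
    {M : ℝ} (hM : ∑ i, p i * s i ≤ M) {c : ℝ} (hc : 0 ≤ c) :
    ∑ i, p i * s i ≤
      c + ((pmfSum fun i => berS (p i) (hp1 i) (s i)).toMeasure (Set.Ioi c)).toReal * (1 + M) := by
  induction N generalizing c with
  | zero =>
    have hM0 : 0 ≤ M := by simpa using hM
    simp only [Finset.univ_eq_empty, Finset.sum_empty]
    positivity
  | succ N ih =>
    set R := pmfSum fun i : Fin N => berS (p i.succ) (hp1 i.succ) (s i.succ)
    set μR := ∑ i : Fin N, p i.succ * s i.succ
    have hμR : μR ≤ M := by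
      rw [Fin.sum_univ_succ] at hM
      linarith [mul_nonneg (hp0 0) (hs0 0)]
    have ih' {c : ℝ} (hc : 0 ≤ c) : μR ≤ c + (R.toMeasure (Set.Ioi c)).toReal * (1 + M) :=
      ih (fun i => p i.succ) (fun i => s i.succ) (fun i => hp0 i.succ) (fun i => hp1 i.succ)
        (fun i => hs0 i.succ) (fun i => hs1 i.succ) hμR hc
    have hbig : s 0 + μR ≤ c + (R.toMeasure (Set.Ioi (c - s 0))).toReal * (1 + M) := by
      rcases le_or_gt (s 0) c with hsc | hcs
      · linarith [ih' (sub_nonneg.mpr hsc)]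
      · have hR_nonneg : ∀ x ∈ R.support, 0 ≤ x :=
          nonneg_of_mem_support_pmfSum fun i => nonneg_of_mem_support_berS _ (hs0 i.succ)
        have hone : R.toMeasure (Set.Ioi (c - s 0)) = 1 :=
          (PMF.toMeasure_apply_eq_one_iff _ measurableSet_Ioi).mpr fun x hx =>
            show c - s 0 < x by linarith [hR_nonneg x hx]
        rw [hone, ENNReal.toReal_one]
        linarith [hs1 0]
    rw [pmfSum_succ, toReal_conv_berS_Ioi (hp0 0), Fin.sum_univ_succ]
    linarith [mul_le_mul_of_nonneg_left hbig (hp0 0),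
      mul_le_mul_of_nonneg_left (ih' hc) (sub_nonneg.mpr (hp1 0))]

/-- If `Xᵢ ~ Ber(pᵢ, sᵢ)` are independent with `0 < sᵢ ≤ 1`, `B = Σᵢ Xᵢ`, and
`ℙ(B > 1) ≤ α < 1`, then `𝔼(B) = Σᵢ pᵢ sᵢ ≤ (1 + α)/(1 − α)`. -/
theorem stmt6 (N : ℕ) (p s : Fin N → ℝ)
    (hp0 : ∀ i, 0 < p i) (hp1 : ∀ i, p i ≤ 1)
    (hs0 : ∀ i, 0 < s i) (hs1 : ∀ i, s i ≤ 1)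
    (α : ℝ) (hα1 : α < 1)
    (hover : ((pmfSum fun i => berS (p i) (hp1 i) (s i)).toMeasure {x | 1 < x}).toReal ≤ α) :
    ∑ i, p i * s i ≤ (1 + α) / (1 - α) := by
  rw [show {x : ℝ | 1 < x} = Set.Ioi 1 from rfl] at hover
  have hμ0 : 0 ≤ ∑ i, p i * s i :=
    Finset.sum_nonneg fun i _ => mul_nonneg (hp0 i).le (hs0 i).le
  have hmean : ∑ i, p i * s i ≤ 1 + α * (1 + ∑ i, p i * s i) :=
    (sum_mul_le_add_toReal_pmfSum_berS_Ioi_mul p s (fun i => (hp0 i).le) hp1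
      (fun i => (hs0 i).le) hs1 le_rfl zero_le_one).trans
      (add_le_add_right (mul_le_mul_of_nonneg_right hover (by positivity)) 1)
  rw [le_div_iff₀ (sub_pos.mpr hα1)]
  linarith
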